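/- For any Hermitian matrix ρ ∈ ℂ^(N×N) and K ≤ N, if P is the orthogonal projector onto the span of eigenvectors of ρ corresponding to K eigenvalues of largest absolute value, then ‖ρ − PρP‖²_HS equals the sum of squares of the remaining N−K eigenvalues of ρ; i.e., the lower bound of the Eckart–Young-type inequality for Hermitian matrices is attained by M = PρP. -/

import Mathlib

/-!
Conjugation by the unitary `V` is a ⋆-algebra automorphism that preserves the Hilbert–Schmidt
norm, so `ρ - PρP` may be computed in the eigenbasis, where `ρ` and `P` are diagonal and
`ρ - PρP` just keeps the eigenvalues `λ_i` with `i ≥ K`.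
-/

open Matrix BigOperators

noncomputable def hsNormSq {N : ℕ} (A : Matrix (Fin N) (Fin N) ℂ) : ℝ :=
  ∑ i, ∑ j, ‖A i j‖ ^ 2

open Unitary

lemma hsNormSq_eq_re_trace {N : ℕ} (A : Matrix (Fin N) (Fin N) ℂ) :
    hsNormSq A = (Aᴴ * A).trace.re := by
  simp only [hsNormSq, trace, diag, mul_apply, conjTranspose_apply, Complex.re_sum]
  rw [Finset.sum_comm]
  refine Finset.sum_congr rfl fun i _ => Finset.sum_congr rfl fun j _ => ?_
  simp [Complex.sq_norm, Complex.normSq_apply]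

lemma trace_unitary_conj {n R : Type*} [Fintype n] [DecidableEq n] [CommRing R] [StarRing R]
    {V : Matrix n n R} (hV : V ∈ unitaryGroup n R) (A : Matrix n n R) :
    (V * A * Vᴴ).trace = A.trace := by
  rw [trace_mul_cycle, ← star_eq_conjTranspose, star_mul_self_of_mem hV, Matrix.one_mul]

lemma hsNormSq_unitary_conj {N : ℕ} {V : Matrix (Fin N) (Fin N) ℂ}
    (hV : V ∈ unitaryGroup (Fin N) ℂ) (A : Matrix (Fin N) (Fin N) ℂ) :
    hsNormSq (V * A * Vᴴ) = hsNormSq A := by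
  have hmul : (V * A * Vᴴ)ᴴ * (V * A * Vᴴ) = V * (Aᴴ * A) * Vᴴ := by
    simp only [← star_eq_conjTranspose,
      ← conjStarAlgAut_apply (S := ℂ) (⟨V, hV⟩ : unitaryGroup (Fin N) ℂ), ← map_star, ← map_mul]
  rw [hsNormSq_eq_re_trace, hsNormSq_eq_re_trace, hmul, trace_unitary_conj hV]

lemma hsNormSq_diagonal {N : ℕ} (d : Fin N → ℂ) : hsNormSq (diagonal d) = ∑ i, ‖d i‖ ^ 2 := by
  refine Finset.sum_congr rfl fun i _ => ?_
  rw [Finset.sum_eq_single i (fun j _ hji => by simp [diagonal_apply_ne _ hji.symm]) (by simp),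
    diagonal_apply_eq]

theorem stmt1_general {N K : ℕ} (ρ : Matrix (Fin N) (Fin N) ℂ)
    (lam : Fin N → ℝ) (V : Matrix (Fin N) (Fin N) ℂ)
    (hV : V ∈ Matrix.unitaryGroup (Fin N) ℂ)
    (hdiag : ρ = V * Matrix.diagonal (fun i => (lam i : ℂ)) * Vᴴ)
    (P : Matrix (Fin N) (Fin N) ℂ)
    (hP : P = V * Matrix.diagonal (fun i : Fin N => if (i : ℕ) < K then (1 : ℂ) else 0) * Vᴴ) :
    hsNormSq (ρ - P * ρ * P)
      = ∑ i ∈ Finset.univ.filter (fun i : Fin N => K ≤ (i : ℕ)), (lam i) ^ 2 := by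
  have hconj : ρ - P * ρ * P =
      V * diagonal (fun i : Fin N => if (i : ℕ) < K then 0 else (lam i : ℂ)) * Vᴴ := by
    rw [hdiag, hP, ← star_eq_conjTranspose]
    simp only [← conjStarAlgAut_apply (S := ℂ) (⟨V, hV⟩ : unitaryGroup (Fin N) ℂ), ← map_mul,
      ← map_sub, diagonal_mul_diagonal, diagonal_sub]
    congr 2
    funext i
    split_ifs <;> simp
  rw [hconj, hsNormSq_unitary_conj hV, hsNormSq_diagonal, Finset.sum_filter]
  refine Finset.sum_congr rfl fun i _ => ?_
  split_ifs <;> first | omega | simp [Complex.norm_real, sq_abs]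

/-- The Eckart–Young-type lower bound for Hermitian matrices is attained by `M = P ρ P`,
where `P` is the orthogonal projector onto the span of eigenvectors corresponding to the
`K` eigenvalues of largest absolute value. -/
theorem stmt1 {N K : ℕ} (ρ : Matrix (Fin N) (Fin N) ℂ)
    (hρ : ρ.IsHermitian)
    (lam : Fin N → ℝ) (V : Matrix (Fin N) (Fin N) ℂ)
    (hV : V ∈ Matrix.unitaryGroup (Fin N) ℂ)
    (hdiag : ρ = V * Matrix.diagonal (fun i => (lam i : ℂ)) * Vᴴ)
    (hord : ∀ i j : Fin N, i ≤ j → |lam j| ≤ |lam i|)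
    (P : Matrix (Fin N) (Fin N) ℂ)
    (hP : P = V * Matrix.diagonal (fun i : Fin N => if (i : ℕ) < K then (1 : ℂ) else 0) * Vᴴ) :
    hsNormSq (ρ - P * ρ * P)
      = ∑ i ∈ Finset.univ.filter (fun i : Fin N => K ≤ (i : ℕ)), (lam i) ^ 2 :=
  stmt1_general ρ lam V hV hdiag P hP
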